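/- For all n ≥ 0, c_1⁴·α^n + c_2⁴·β^n + c_3⁴·γ^n + c_4⁴·δ^n = (1/563²)·W_n, where W_n is the Tetranacci-type sequence with W_0 = 3052, W_1 = 4658, W_2 = 8804, W_3 = 16451 and W_n = W_{n−1} + W_{n−2} + W_{n−3} + W_{n−4} for n ≥ 4. -/

import Mathlib

/-!
The four roots are distinct, so the divided differences of the quartic give Vieta's formulas, and
with them `(α - β)(α - γ)(α - δ) = p'(α)` for `p = X⁴ - X³ - X² - X - 1`. Since
`p' · (16X³ - 103X² + 157X + 10) ≡ 563 (mod p)`, each `c = α² / p'(α)` is a polynomial in `α`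
divided by `563`, and reducing modulo `p` gives `563² c⁴ = 248 - 175α + 255α² + 210α³`.
Hence `563² Σ c⁴ αⁿ` is a fixed integer combination of the power sums `Σ αⁿ`, which are the
Tetranacci–Lucas numbers `4, 1, 3, 7, 15, …`, and that combination is `W_n`: both sides satisfy
the Tetranacci recurrence and agree for `n ≤ 3`.
-/

def seqW : ℕ → ℤ
  | 0 => 3052
  | 1 => 4658
  | 2 => 8804
  | 3 => 16451
  | n + 4 => seqW (n + 3) + seqW (n + 2) + seqW (n + 1) + seqW n

def IsTetranacci {R : Type*} [Add R] (u : ℕ → R) : Prop :=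
  ∀ n, u (n + 4) = u (n + 3) + u (n + 2) + u (n + 1) + u n

namespace IsTetranacci

variable {R : Type*}

theorem ext [Add R] {u v : ℕ → R} (hu : IsTetranacci u) (hv : IsTetranacci v)
    (h0 : u 0 = v 0) (h1 : u 1 = v 1) (h2 : u 2 = v 2) (h3 : u 3 = v 3) : u = v := by
  suffices h : ∀ n, u n = v n ∧ u (n + 1) = v (n + 1) ∧ u (n + 2) = v (n + 2) ∧
      u (n + 3) = v (n + 3) from funext fun n => (h n).1
  intro n
  induction n with
  | zero => exact ⟨h0, h1, h2, h3⟩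
  | succ n ih =>
    obtain ⟨e0, e1, e2, e3⟩ := ih
    exact ⟨e1, e2, e3, by rw [hu, hv, e0, e1, e2, e3]⟩

theorem intCast [AddGroupWithOne R] {u : ℕ → ℤ} (hu : IsTetranacci u) :
    IsTetranacci fun n => (u n : R) := fun n => by
  simp only [hu n, Int.cast_add]

theorem pow [CommRing R] {x : R} (hx : x ^ 4 - x ^ 3 - x ^ 2 - x - 1 = 0) :
    IsTetranacci (x ^ ·) := fun n => by
  linear_combination x ^ n * hx

end IsTetranacci

theorem isTetranacci_seqW : IsTetranacci seqW := fun _ => rfl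

def tetraLucas : ℕ → ℤ
  | 0 => 4
  | 1 => 1
  | 2 => 3
  | 3 => 7
  | n + 4 => tetraLucas (n + 3) + tetraLucas (n + 2) + tetraLucas (n + 1) + tetraLucas n

theorem isTetranacci_tetraLucas : IsTetranacci tetraLucas := fun _ => rfl

theorem seqW_eq_tetraLucas (n : ℕ) :
    seqW n = 248 * tetraLucas n - 175 * tetraLucas (n + 1) + 255 * tetraLucas (n + 2)
      + 210 * tetraLucas (n + 3) := by
  have hL := isTetranacci_tetraLucas
  have hrhs : IsTetranacci fun n => 248 * tetraLucas n - 175 * tetraLucas (n + 1)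
      + 255 * tetraLucas (n + 2) + 210 * tetraLucas (n + 3) := fun n => by
    linear_combination 248 * hL n - 175 * hL (n + 1) + 255 * hL (n + 2) + 210 * hL (n + 3)
  exact congrFun (isTetranacci_seqW.ext hrhs rfl rfl rfl rfl) n

section Quartic

variable {R : Type*} [CommRing R] [IsDomain R] {a b c d x y z w : R}

theorem quartic_vieta
    (hx : x ^ 4 + a * x ^ 3 + b * x ^ 2 + c * x + d = 0)
    (hy : y ^ 4 + a * y ^ 3 + b * y ^ 2 + c * y + d = 0)
    (hz : z ^ 4 + a * z ^ 3 + b * z ^ 2 + c * z + d = 0)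
    (hw : w ^ 4 + a * w ^ 3 + b * w ^ 2 + c * w + d = 0)
    (hxy : x ≠ y) (hxz : x ≠ z) (hxw : x ≠ w) (hyz : y ≠ z) (hyw : y ≠ w) (hzw : z ≠ w) :
    x + y + z + w = -a ∧ x * y + x * z + x * w + y * z + y * w + z * w = b ∧
      x * y * z + x * y * w + x * z * w + y * z * w = -c := by
  have dxy : x ^ 3 + x ^ 2 * y + x * y ^ 2 + y ^ 3 + a * (x ^ 2 + x * y + y ^ 2)
      + b * (x + y) + c = 0 :=
    mul_left_cancel₀ (sub_ne_zero.mpr hxy) (by linear_combination hx - hy)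
  have dxz : x ^ 3 + x ^ 2 * z + x * z ^ 2 + z ^ 3 + a * (x ^ 2 + x * z + z ^ 2)
      + b * (x + z) + c = 0 :=
    mul_left_cancel₀ (sub_ne_zero.mpr hxz) (by linear_combination hx - hz)
  have dxw : x ^ 3 + x ^ 2 * w + x * w ^ 2 + w ^ 3 + a * (x ^ 2 + x * w + w ^ 2)
      + b * (x + w) + c = 0 :=
    mul_left_cancel₀ (sub_ne_zero.mpr hxw) (by linear_combination hx - hw)
  have dxyz : x ^ 2 + y ^ 2 + z ^ 2 + x * y + x * z + y * z + a * (x + y + z) + b = 0 :=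
    mul_left_cancel₀ (sub_ne_zero.mpr hyz) (by linear_combination dxy - dxz)
  have dxyw : x ^ 2 + y ^ 2 + w ^ 2 + x * y + x * w + y * w + a * (x + y + w) + b = 0 :=
    mul_left_cancel₀ (sub_ne_zero.mpr hyw) (by linear_combination dxy - dxw)
  have e1 : x + y + z + w = -a :=
    mul_left_cancel₀ (sub_ne_zero.mpr hzw) (by linear_combination dxyz - dxyw)
  have e2 : x * y + x * z + x * w + y * z + y * w + z * w = b := by
    linear_combination -dxyz + (x + y + z) * e1
  refine ⟨e1, e2, ?_⟩
  linear_combination dxy + (x * y - (x + y) ^ 2) * e1 + (x + y) * e2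

theorem quartic_prod_sub_eq_derivative
    (hx : x ^ 4 + a * x ^ 3 + b * x ^ 2 + c * x + d = 0)
    (hy : y ^ 4 + a * y ^ 3 + b * y ^ 2 + c * y + d = 0)
    (hz : z ^ 4 + a * z ^ 3 + b * z ^ 2 + c * z + d = 0)
    (hw : w ^ 4 + a * w ^ 3 + b * w ^ 2 + c * w + d = 0)
    (hxy : x ≠ y) (hxz : x ≠ z) (hxw : x ≠ w) (hyz : y ≠ z) (hyw : y ≠ w) (hzw : z ≠ w) :
    (x - y) * (x - z) * (x - w) = 4 * x ^ 3 + 3 * a * x ^ 2 + 2 * b * x + c := by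
  obtain ⟨e1, e2, e3⟩ := quartic_vieta hx hy hz hw hxy hxz hxw hyz hyw hzw
  linear_combination (-3 * x ^ 2) * e1 + 2 * x * e2 - e3

end Quartic

section TetranacciPolynomial

variable {K : Type*} [Field K]

theorem tetranacci_prod_sub_eq_derivative {x y z w : K}
    (hx : x ^ 4 - x ^ 3 - x ^ 2 - x - 1 = 0) (hy : y ^ 4 - y ^ 3 - y ^ 2 - y - 1 = 0)
    (hz : z ^ 4 - z ^ 3 - z ^ 2 - z - 1 = 0) (hw : w ^ 4 - w ^ 3 - w ^ 2 - w - 1 = 0)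
    (hxy : x ≠ y) (hxz : x ≠ z) (hxw : x ≠ w) (hyz : y ≠ z) (hyw : y ≠ w) (hzw : z ≠ w) :
    (x - y) * (x - z) * (x - w) = 4 * x ^ 3 - 3 * x ^ 2 - 2 * x - 1 := by
  have h := quartic_prod_sub_eq_derivative (a := -1) (b := -1) (c := -1) (d := -1)
    (by linear_combination hx) (by linear_combination hy) (by linear_combination hz)
    (by linear_combination hw) hxy hxz hxw hyz hyw hzw
  linear_combination h

theorem tetranacci_pow_sum_eq_tetraLucas {x y z w : K}
    (hx : x ^ 4 - x ^ 3 - x ^ 2 - x - 1 = 0) (hy : y ^ 4 - y ^ 3 - y ^ 2 - y - 1 = 0)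
    (hz : z ^ 4 - z ^ 3 - z ^ 2 - z - 1 = 0) (hw : w ^ 4 - w ^ 3 - w ^ 2 - w - 1 = 0)
    (hxy : x ≠ y) (hxz : x ≠ z) (hxw : x ≠ w) (hyz : y ≠ z) (hyw : y ≠ w) (hzw : z ≠ w)
    (n : ℕ) : x ^ n + y ^ n + z ^ n + w ^ n = tetraLucas n := by
  obtain ⟨e1, e2, e3⟩ := quartic_vieta (a := -1) (b := -1) (c := -1) (d := -1)
    (by linear_combination hx) (by linear_combination hy) (by linear_combination hz)
    (by linear_combination hw) hxy hxz hxw hyz hyw hzw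
  have hsum : IsTetranacci fun n => x ^ n + y ^ n + z ^ n + w ^ n := fun n => by
    linear_combination (IsTetranacci.pow hx n) + (IsTetranacci.pow hy n)
      + (IsTetranacci.pow hz n) + (IsTetranacci.pow hw n)
  refine congrFun (hsum.ext isTetranacci_tetraLucas.intCast ?_ ?_ ?_ ?_) n
  · norm_num [tetraLucas]
  · norm_num [tetraLucas]
    linear_combination e1
  · norm_num [tetraLucas]
    linear_combination (x + y + z + w + 1) * e1 - 2 * e2
  · norm_num [tetraLucas]
    linear_combination ((x + y + z + w) ^ 2 + (x + y + z + w) + 4) * e1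
      - 3 * (x + y + z + w) * e2 + 3 * e3

/-- `563` is minus the discriminant of `X⁴ - X³ - X² - X - 1`. -/
theorem tetranacci_sq_div_derivative_pow_four [CharZero K] {x : K}
    (hx : x ^ 4 - x ^ 3 - x ^ 2 - x - 1 = 0) :
    563 ^ 2 * (x ^ 2 / (4 * x ^ 3 - 3 * x ^ 2 - 2 * x - 1)) ^ 4
      = 248 - 175 * x + 255 * x ^ 2 + 210 * x ^ 3 := by
  set c := x ^ 2 / (4 * x ^ 3 - 3 * x ^ 2 - 2 * x - 1)
  set q := 16 * x ^ 3 - 103 * x ^ 2 + 157 * x + 10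
  have hinv : (4 * x ^ 3 - 3 * x ^ 2 - 2 * x - 1) * q = 563 := by
    linear_combination (64 * x ^ 2 - 396 * x + 573) * hx
  have hderiv : 4 * x ^ 3 - 3 * x ^ 2 - 2 * x - 1 ≠ 0 := by
    intro h
    rw [h, zero_mul] at hinv
    norm_num at hinv
  have hc : 563 * c = x ^ 2 * q := by
    linear_combination q * div_mul_cancel₀ (x ^ 2) hderiv - c * hinv
  have hc2 : 563 * c ^ 2 = 6 + 9 * x + 28 * x ^ 2 - 11 * x ^ 3 :=
    mul_left_cancel₀ (by norm_num : (563 : K) ≠ 0) (by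
      linear_combination (563 * c + x ^ 2 * q) * hc
        + (256 * x ^ 6 - 3040 * x ^ 5 + 12849 * x ^ 4 - 21957 * x ^ 3 + 10697 * x ^ 2
          + 1689 * x + 3378) * hx)
  linear_combination (563 * c ^ 2 + 6 + 9 * x + 28 * x ^ 2 - 11 * x ^ 3) * hc2
    + (121 * x ^ 2 - 495 * x + 212) * hx

end TetranacciPolynomial

theorem tetra_c_fourth (α β γ δ : ℂ)
    (hα : α ^ 4 - α ^ 3 - α ^ 2 - α - 1 = 0) (hβ : β ^ 4 - β ^ 3 - β ^ 2 - β - 1 = 0)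
    (hγ : γ ^ 4 - γ ^ 3 - γ ^ 2 - γ - 1 = 0) (hδ : δ ^ 4 - δ ^ 3 - δ ^ 2 - δ - 1 = 0)
    (hαβ : α ≠ β) (hαγ : α ≠ γ) (hαδ : α ≠ δ) (hβγ : β ≠ γ) (hβδ : β ≠ δ) (hγδ : γ ≠ δ)
    (c₁ c₂ c₃ c₄ : ℂ)
    (hc₁ : c₁ = α ^ 2 / ((α - β) * (α - γ) * (α - δ)))
    (hc₂ : c₂ = β ^ 2 / ((β - α) * (β - γ) * (β - δ)))
    (hc₃ : c₃ = γ ^ 2 / ((γ - α) * (γ - β) * (γ - δ)))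
    (hc₄ : c₄ = δ ^ 2 / ((δ - α) * (δ - β) * (δ - γ))) (n : ℕ) :
    c₁ ^ 4 * α ^ n + c₂ ^ 4 * β ^ n + c₃ ^ 4 * γ ^ n + c₄ ^ 4 * δ ^ n
      = (1 / 563 ^ 2 : ℂ) * seqW n := by
  have h₁ := tetranacci_sq_div_derivative_pow_four hα
  have h₂ := tetranacci_sq_div_derivative_pow_four hβ
  have h₃ := tetranacci_sq_div_derivative_pow_four hγ
  have h₄ := tetranacci_sq_div_derivative_pow_four hδ
  rw [← tetranacci_prod_sub_eq_derivative hα hβ hγ hδ hαβ hαγ hαδ hβγ hβδ hγδ, ← hc₁] at h₁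
  rw [← tetranacci_prod_sub_eq_derivative hβ hα hγ hδ hαβ.symm hβγ hβδ hαγ hαδ hγδ, ← hc₂] at h₂
  rw [← tetranacci_prod_sub_eq_derivative hγ hα hβ hδ hαγ.symm hβγ.symm hγδ hαβ hαδ hβδ,
    ← hc₃] at h₃
  rw [← tetranacci_prod_sub_eq_derivative hδ hα hβ hγ hαδ.symm hβδ.symm hγδ.symm hαβ hαγ hβγ,
    ← hc₄] at h₄
  have hpow := tetranacci_pow_sum_eq_tetraLucas hα hβ hγ hδ hαβ hαγ hαδ hβγ hβδ hγδ
  rw [seqW_eq_tetraLucas]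
  push_cast
  rw [← hpow, ← hpow, ← hpow, ← hpow]
  linear_combination (α ^ n / 563 ^ 2) * h₁ + (β ^ n / 563 ^ 2) * h₂ + (γ ^ n / 563 ^ 2) * h₃
    + (δ ^ n / 563 ^ 2) * h₄
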